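/- arXiv:2202.00371 — 5 statements merged into one kernel-verified Lean document; each statement's English description precedes it below -/
import Mathlib

section
/- Let E be a locally convex space (or just a topological vector space) and C ⊆ E a closed convex set. Then C has convex countable tightness (i.e., for every convex D ⊆ C and every x in the closure of D there is a countable D₀ ⊆ D with x in the closure of D₀) if and only if every ω-closed convex subset of C is closed, where a set D is ω-closed if the closure of every countable subset of D is contained in D. -/
/-- A convex set `C` in a topological vector space has *convex countable tightness* if
for every convex `D ⊆ C` and every `x` in the closure of `D` there is a countable
`D₀ ⊆ D` with `x` in the closure of `D₀`. -/
def ConvexCountableTightness {E : Type*} [AddCommGroup E] [Module ℝ E]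
    [TopologicalSpace E] (C : Set E) : Prop :=
  ∀ D ⊆ C, Convex ℝ D → ∀ x ∈ closure D,
    ∃ D₀ ⊆ D, D₀.Countable ∧ x ∈ closure D₀

/-- A subset `D` of a topological space is *ω-closed* if the closure of every countable
subset of `D` is contained in `D`. -/
def OmegaClosed {E : Type*} [TopologicalSpace E] (D : Set E) : Prop :=
  ∀ D₀ ⊆ D, D₀.Countable → closure D₀ ⊆ D

/-! The closures of countable subsets of `D` together form a set `omegaClosure D` between `D` and
`closure D`. It is ω-closed because countable unions of countable sets are countable, and convex
because `(x, y) ↦ a • x + b • y` maps `closure t₁ ×ˢ closure t₂` into the closure of the countable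
set `a • t₁ + b • t₂`. So when every ω-closed convex subset of `C` is closed, `omegaClosure D` is
closed and hence contains `closure D`. -/
open Set

section OmegaClosure

variable {X : Type*} [TopologicalSpace X]

def omegaClosure (s : Set X) : Set X :=
  {x | ∃ t ⊆ s, t.Countable ∧ x ∈ closure t}

theorem subset_omegaClosure (s : Set X) : s ⊆ omegaClosure s := fun x hx =>
  ⟨{x}, singleton_subset_iff.2 hx, countable_singleton x, subset_closure rfl⟩

theorem omegaClosure_subset_closure (s : Set X) : omegaClosure s ⊆ closure s := by
  rintro x ⟨t, hts, -, hx⟩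
  exact closure_mono hts hx

theorem omegaClosed_omegaClosure (s : Set X) : OmegaClosed (omegaClosure s) := by
  intro u hu hu_cnt x hx
  have := hu_cnt.to_subtype
  choose t hts ht_cnt hyt using fun y : u => hu y.2
  refine ⟨⋃ y : u, t y, iUnion_subset hts, countable_iUnion ht_cnt, ?_⟩
  have hu_sub : u ⊆ closure (⋃ y : u, t y) := fun y hy =>
    closure_mono (subset_iUnion t ⟨y, hy⟩) (hyt ⟨y, hy⟩)
  exact closure_minimal hu_sub isClosed_closure hx

end OmegaClosure

theorem Convex.omegaClosure {𝕜 E : Type*} [Semiring 𝕜] [PartialOrder 𝕜] [AddCommMonoid E]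
    [Module 𝕜 E] [TopologicalSpace E] [ContinuousAdd E] [ContinuousConstSMul 𝕜 E]
    {s : Set E} (hs : Convex 𝕜 s) : Convex 𝕜 (omegaClosure s) := by
  rintro x ⟨t₁, ht₁, ht₁_cnt, hx⟩ y ⟨t₂, ht₂, ht₂_cnt, hy⟩ a b ha hb hab
  let f : E × E → E := fun p => a • p.1 + b • p.2
  have hf : Continuous f := (continuous_fst.const_smul a).add (continuous_snd.const_smul b)
  refine ⟨f '' (t₁ ×ˢ t₂), ?_, (ht₁_cnt.prod ht₂_cnt).image f, ?_⟩
  · rintro _ ⟨⟨u, v⟩, ⟨hu, hv⟩, rfl⟩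
    exact hs (ht₁ hu) (ht₂ hv) ha hb hab
  · have hxy : (x, y) ∈ closure (t₁ ×ˢ t₂) := by
      rw [closure_prod_eq]
      exact ⟨hx, hy⟩
    exact image_closure_subset_closure_image hf ⟨(x, y), hxy, rfl⟩

theorem ConvexCountableTightness.isClosed_of_omegaClosed {E : Type*} [AddCommGroup E]
    [Module ℝ E] [TopologicalSpace E] {C D : Set E} (hC : ConvexCountableTightness C)
    (hDC : D ⊆ C) (hD : Convex ℝ D) (hD_ω : OmegaClosed D) : IsClosed D := by
  refine isClosed_of_closure_subset fun x hx => ?_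
  obtain ⟨D₀, hD₀, hD₀_cnt, hx₀⟩ := hC D hDC hD x hx
  exact hD_ω D₀ hD₀ hD₀_cnt hx₀

theorem convexCountableTightness_iff_omegaClosed_convex_isClosed_general
    {E : Type*} [AddCommGroup E] [Module ℝ E] [TopologicalSpace E]
    [IsTopologicalAddGroup E] [ContinuousSMul ℝ E]
    (C : Set E) (hCclosed : IsClosed C) :
    ConvexCountableTightness C ↔
      ∀ D ⊆ C, Convex ℝ D → OmegaClosed D → IsClosed D := by
  refine ⟨fun hC D => hC.isClosed_of_omegaClosed, fun h D hDC hD x hx => ?_⟩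
  have hT_sub : omegaClosure D ⊆ C :=
    (omegaClosure_subset_closure D).trans (hCclosed.closure_subset_iff.2 hDC)
  have hT_closed : IsClosed (omegaClosure D) :=
    h _ hT_sub hD.omegaClosure (omegaClosed_omegaClosure D)
  exact hT_closed.closure_subset_iff.2 (subset_omegaClosure D) hx

/-- Let `E` be a (real, locally convex) topological vector space and
`C ⊆ E` a closed convex set. Then `C` has convex countable tightness if and only if
every ω-closed convex subset of `C` is closed. -/
theorem convexCountableTightness_iff_omegaClosed_convex_isClosed
    {E : Type*} [AddCommGroup E] [Module ℝ E] [TopologicalSpace E]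
    [IsTopologicalAddGroup E] [ContinuousSMul ℝ E] [LocallyConvexSpace ℝ E]
    (C : Set E) (hCclosed : IsClosed C) (hCconv : Convex ℝ C) :
    ConvexCountableTightness C ↔
      ∀ D ⊆ C, Convex ℝ D → OmegaClosed D → IsClosed D :=
  convexCountableTightness_iff_omegaClosed_convex_isClosed_general C hCclosed
end

section
/- Let E₁, E₂ be locally convex spaces and C₁ ⊆ E₁, C₂ ⊆ E₂ compact convex sets, each having convex countable tightness. Then the product C₁ × C₂ has convex countable tightness in E₁ × E₂. -/
/-!
Fix a convex `D ⊆ C₁ × C₂` and `x ∈ closure D`, and let `G ⊆ C₂` be the set of `y` such that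
`(x₁, y)` is a limit of a countable subset of `D`; `G` is convex. For a convex neighbourhood `V`
of `x₂`, tightness of `C₁` applied to the first projection of `D ∩ (E₁ × V)` yields a countable
`S ⊆ D ∩ (E₁ × V)` whose projection accumulates at `x₁`, and compactness of `C₁ × C₂` turns this
into a point `(x₁, y) ∈ closure S` with `y ∈ C₂ ∩ closure V`. By local convexity of `E₂` this
gives `x₂ ∈ closure G`, and tightness of `C₂` provides a countable `G₀ ⊆ G` with `x₂` in its
closure; the union of the countably many countable sets witnessing `G₀ ⊆ G` approximates `x`.
-/

open Set Topology

/-- `ConvexCountableTightness C` unfolds to `closure D ⊆ countableClosure D` for convex `D ⊆ C`. -/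
def countableClosure {X : Type*} [TopologicalSpace X] (D : Set X) : Set X :=
  {x | ∃ D₀ ⊆ D, D₀.Countable ∧ x ∈ closure D₀}

section Topology

variable {X Y : Type*} [TopologicalSpace X] [TopologicalSpace Y]

theorem countableClosure_mono {D D' : Set X} (h : D ⊆ D') :
    countableClosure D ⊆ countableClosure D' :=
  fun _ ⟨D₀, hD₀, hc, hx⟩ => ⟨D₀, hD₀.trans h, hc, hx⟩

theorem countableClosure_subset_closure (D : Set X) : countableClosure D ⊆ closure D :=
  fun _ ⟨_, hD₀, _, hx⟩ => closure_mono hD₀ hx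

theorem closure_subset_countableClosure_of_countable {D T : Set X} (hT : T.Countable)
    (hTD : T ⊆ countableClosure D) : closure T ⊆ countableClosure D := by
  have hTD' : ∀ t ∈ T, ∃ S ⊆ D, S.Countable ∧ t ∈ closure S := hTD
  choose! S hSD hSc hTS using hTD'
  refine fun x hx => ⟨⋃ t ∈ T, S t, iUnion₂_subset hSD, hT.biUnion hSc, ?_⟩
  exact closure_minimal (fun t ht => closure_mono (subset_biUnion_of_mem ht) (hTS t ht))
    isClosed_closure hx

theorem exists_mk_mem_closure_of_mem_closure_image_fst [R1Space X] [R1Space Y]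
    {C₁ : Set X} {C₂ : Set Y} (h₁ : IsCompact C₁) (h₂ : IsCompact C₂) {A : Set (X × Y)}
    (hA : A ⊆ C₁ ×ˢ C₂) {x : X} (hx : x ∈ closure (Prod.fst '' A)) :
    ∃ y ∈ C₂, (x, y) ∈ closure A := by
  have hK : IsCompact (closure A) := (h₁.prod h₂).closure_of_subset hA
  obtain ⟨_, ⟨p, hpA, rfl⟩, hpx⟩ := (hK.image continuous_fst).mem_closure_iff_exists_inseparable.mp
    (closure_mono (image_mono subset_closure) hx)
  have hp₂ : p.2 ∈ closure C₂ := (closure_prod_eq.le (closure_mono hA hpA)).2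
  obtain ⟨y, hy, hyp⟩ := h₂.mem_closure_iff_exists_inseparable.mp hp₂
  exact ⟨y, hy, ((hpx.prod hyp.symm).mem_closed_iff isClosed_closure).mp hpA⟩

end Topology

theorem Convex.countableClosure {E : Type*} [AddCommGroup E] [Module ℝ E] [TopologicalSpace E]
    [ContinuousAdd E] [ContinuousConstSMul ℝ E] {D : Set E} (hD : Convex ℝ D) :
    Convex ℝ (countableClosure D) := by
  rintro x ⟨S, hSD, hSc, hxS⟩ y ⟨T, hTD, hTc, hyT⟩ a b ha hb hab
  refine ⟨image2 (fun u v => a • u + b • v) S T, ?_, hSc.image2 hTc _,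
    map_mem_closure₂ (f := fun u v => a • u + b • v) (by fun_prop) hxS hyT fun u hu v hv => mem_image2_of_mem hu hv⟩
  rintro _ ⟨u, hu, v, hv, rfl⟩
  exact hD (hSD hu) (hTD hv) ha hb hab

namespace ConvexCountableTightness

variable {E₁ E₂ : Type*} [AddCommGroup E₁] [Module ℝ E₁] [TopologicalSpace E₁] [R1Space E₁]
  [AddCommGroup E₂] [Module ℝ E₂] [TopologicalSpace E₂]
  {C₁ : Set E₁} {C₂ : Set E₂} {D : Set (E₁ × E₂)}

theorem exists_mk_mem_countableClosure [R1Space E₂] (h₁ : ConvexCountableTightness C₁)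
    (h₁c : IsCompact C₁) (h₂c : IsCompact C₂) (hD : D ⊆ C₁ ×ˢ C₂) (hDconv : Convex ℝ D)
    {x : E₁} (hx : x ∈ closure (Prod.fst '' D)) : ∃ y ∈ C₂, (x, y) ∈ countableClosure D := by
  obtain ⟨A₀, hA₀, hA₀c, hxA₀⟩ := h₁ _ (image_subset_iff.2 fun p hp => (hD hp).1)
    (hDconv.linear_image (LinearMap.fst ℝ E₁ E₂)) x hx
  obtain ⟨S, hSD, hS⟩ := surjOn_iff_exists_bijOn_subset.mp hA₀
  obtain ⟨y, hy, hxy⟩ :=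
    exists_mk_mem_closure_of_mem_closure_image_fst h₁c h₂c (hSD.trans hD) (hS.image_eq ▸ hxA₀)
  exact ⟨y, hy, S, hSD, hS.mapsTo.countable_of_injOn hS.injOn hA₀c, hxy⟩

theorem snd_mem_closure_inter_preimage_countableClosure [RegularSpace E₂] [LocallyConvexSpace ℝ E₂]
    (h₁ : ConvexCountableTightness C₁) (h₁c : IsCompact C₁) (h₂c : IsCompact C₂)
    (hD : D ⊆ C₁ ×ˢ C₂) (hDconv : Convex ℝ D) {x : E₁ × E₂} (hx : x ∈ closure D) :
    x.2 ∈ closure (C₂ ∩ Prod.mk x.1 ⁻¹' countableClosure D) := by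
  rw [mem_closure_iff_nhds_basis (LocallyConvexSpace.convex_basis (𝕜 := ℝ) x.2).nhds_closure]
  rintro V ⟨hV, hVconv⟩
  have hVx : Prod.snd ⁻¹' V ∈ 𝓝 x := continuous_snd.continuousAt.preimage_mem_nhds hV
  have hxD' : x ∈ closure (D ∩ Prod.snd ⁻¹' V) :=
    closure_mono (inter_subset_inter_right _ interior_subset)
      (isOpen_interior.closure_inter ⟨hx, mem_interior_iff_mem_nhds.2 hVx⟩)
  obtain ⟨y, hy, hxy⟩ := h₁.exists_mk_mem_countableClosure h₁c h₂c (inter_subset_left.trans hD)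
    (hDconv.inter (hVconv.linear_preimage (LinearMap.snd ℝ E₁ E₂)))
    (image_closure_subset_closure_image continuous_fst ⟨x, hxD', rfl⟩)
  refine ⟨y, ⟨hy, countableClosure_mono inter_subset_left hxy⟩, ?_⟩
  exact continuous_snd.closure_preimage_subset V
    (closure_mono inter_subset_right (countableClosure_subset_closure _ hxy))

end ConvexCountableTightness

theorem convexCountableTightness_prod_general
    {E₁ E₂ : Type*} [AddCommGroup E₁] [Module ℝ E₁] [TopologicalSpace E₁]
    [IsTopologicalAddGroup E₁] [ContinuousSMul ℝ E₁]
    [AddCommGroup E₂] [Module ℝ E₂] [TopologicalSpace E₂]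
    [IsTopologicalAddGroup E₂] [ContinuousSMul ℝ E₂] [LocallyConvexSpace ℝ E₂]
    (C₁ : Set E₁) (C₂ : Set E₂)
    (h₁c : IsCompact C₁) (h₁ : ConvexCountableTightness C₁)
    (h₂c : IsCompact C₂) (h₂conv : Convex ℝ C₂) (h₂ : ConvexCountableTightness C₂) :
    ConvexCountableTightness (C₁ ×ˢ C₂) := by
  intro D hD hDconv x hx
  have hG : Convex ℝ (C₂ ∩ Prod.mk x.1 ⁻¹' countableClosure D) :=
    h₂conv.inter (hDconv.countableClosure.affine_preimage
      ((AffineMap.const ℝ E₂ x.1).prod (AffineMap.id ℝ E₂)))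
  obtain ⟨G₀, hG₀, hG₀c, hxG₀⟩ :=
    h₂ _ inter_subset_left hG x.2 (h₁.snd_mem_closure_inter_preimage_countableClosure h₁c h₂c hD hDconv hx)
  show x ∈ countableClosure D
  refine closure_subset_countableClosure_of_countable ((countable_singleton x.1).prod hG₀c) ?_ ?_
  · rintro ⟨a, b⟩ ⟨rfl, hb⟩
    exact (hG₀ hb).2
  · rw [closure_prod_eq]
    exact ⟨subset_closure rfl, hxG₀⟩

/-- If `C₁ ⊆ E₁` and `C₂ ⊆ E₂` are compact convex sets in locally convex
spaces, each having convex countable tightness, then `C₁ × C₂` has convex countable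
tightness in `E₁ × E₂`. -/
theorem convexCountableTightness_prod
    {E₁ E₂ : Type*} [AddCommGroup E₁] [Module ℝ E₁] [TopologicalSpace E₁]
    [IsTopologicalAddGroup E₁] [ContinuousSMul ℝ E₁] [LocallyConvexSpace ℝ E₁]
    [AddCommGroup E₂] [Module ℝ E₂] [TopologicalSpace E₂]
    [IsTopologicalAddGroup E₂] [ContinuousSMul ℝ E₂] [LocallyConvexSpace ℝ E₂]
    (C₁ : Set E₁) (C₂ : Set E₂)
    (h₁c : IsCompact C₁) (h₁conv : Convex ℝ C₁) (h₁ : ConvexCountableTightness C₁)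
    (h₂c : IsCompact C₂) (h₂conv : Convex ℝ C₂) (h₂ : ConvexCountableTightness C₂) :
    ConvexCountableTightness (C₁ ×ˢ C₂) :=
  convexCountableTightness_prod_general C₁ C₂ h₁c h₁ h₂c h₂conv h₂
end

section
/- Let (Eₙ) be a sequence of locally convex spaces and for each n let Cₙ ⊆ Eₙ be a compact convex set having convex countable tightness. Then the product ∏ₙ Cₙ has convex countable tightness in ∏ₙ Eₙ. -/
open Set Filter Topology

theorem IsCompact.exists_prodMk_mem_closure {X Y : Type*} [TopologicalSpace X]
    [TopologicalSpace Y] {K : Set Y} (hK : IsCompact K) {T : Set (X × Y)}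
    (hTK : MapsTo Prod.snd T K) {x : X} (hx : x ∈ closure (Prod.fst '' T)) :
    ∃ y ∈ K, (x, y) ∈ closure T := by
  by_contra! h
  obtain ⟨U, V, hU, -, hxU, hKV, hUV⟩ := generalized_tube_lemma isCompact_singleton hK
    (isClosed_closure (s := T)).isOpen_compl <| by
      rintro ⟨_, y⟩ ⟨rfl, hy⟩
      exact h y hy
  obtain ⟨_, hpU, p, hpT, rfl⟩ := mem_closure_iff.1 hx U hU (hxU rfl)
  exact hUV ⟨hpU, hKV (hTK hpT)⟩ (subset_closure hpT)

theorem mem_closure_iUnion_of_forall_restrict_mem_closure {X : ℕ → Type*}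
    [∀ i, TopologicalSpace (X i)] {x : ∀ i, X i} {T : ℕ → Set (∀ i, X i)}
    (h : ∀ n, (fun i : Fin n ↦ x i) ∈ closure ((fun f (i : Fin n) ↦ f i) '' T n)) :
    x ∈ closure (⋃ n, T n) := by
  refine mem_closure_iff_nhds.2 fun N hN ↦ ?_
  rw [nhds_pi, Filter.mem_pi] at hN
  obtain ⟨I, hI, V, hV, hVN⟩ := hN
  obtain ⟨n, hn⟩ := hI.bddAbove
  have hW : (pi {i : Fin (n + 1) | (i : ℕ) ∈ I} fun i ↦ V i) ∈ 𝓝 fun i : Fin (n + 1) ↦ x i :=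
    set_pi_mem_nhds (toFinite _) fun i _ ↦ hV i
  obtain ⟨_, hpW, p, hpT, rfl⟩ := mem_closure_iff_nhds.1 (h (n + 1)) _ hW
  exact ⟨p, hVN fun i hi ↦ hpW ⟨i, Nat.lt_succ_of_le (hn hi)⟩ hi, mem_iUnion_of_mem _ hpT⟩

namespace ConvexCountableTightness

variable {E F : Type*} [AddCommGroup E] [Module ℝ E] [TopologicalSpace E]
  [AddCommGroup F] [Module ℝ F] [TopologicalSpace F]

theorem exists_countable_map_mem_closure {C : Set F} (hC : ConvexCountableTightness C)
    (f : E →L[ℝ] F) {D : Set E} (hD : Convex ℝ D) (hDC : MapsTo f D C) {x : E}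
    (hx : x ∈ closure D) : ∃ T ⊆ D, T.Countable ∧ f x ∈ closure (f '' T) := by
  obtain ⟨D₀, hD₀, hD₀c, hxD₀⟩ := hC (f '' D) (mapsTo_iff_image_subset.1 hDC)
    (hD.linear_image f.toLinearMap) (f x) (map_mem_closure f.continuous hx (mapsTo_image f D))
  obtain ⟨T, hTD, hT⟩ := surjOn_iff_exists_bijOn_subset.1 hD₀
  exact ⟨T, hTD, hT.mapsTo.countable_of_injOn hT.injOn hD₀c, hT.image_eq ▸ hxD₀⟩

theorem preimage {C : Set F} (hC : ConvexCountableTightness C) (e : E ≃L[ℝ] F) :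
    ConvexCountableTightness (e ⁻¹' C) := by
  intro D hDC hD x hx
  obtain ⟨T, hTD, hTc, hxT⟩ := hC.exists_countable_map_mem_closure (e : E →L[ℝ] F) hD hDC hx
  refine ⟨T, hTD, hTc, ?_⟩
  rw [e.toHomeomorph.isInducing.closure_eq_preimage_closure_image]
  exact hxT

end ConvexCountableTightness

section Prod

variable {E₁ E₂ : Type*} [AddCommGroup E₁] [Module ℝ E₁] [TopologicalSpace E₁]
  [ContinuousAdd E₁] [ContinuousConstSMul ℝ E₁] [AddCommGroup E₂] [Module ℝ E₂]
  [TopologicalSpace E₂] [ContinuousAdd E₂] [ContinuousConstSMul ℝ E₂]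

theorem Convex.setOf_exists_countable_prodMk_mem_closure {D : Set (E₁ × E₂)}
    (hD : Convex ℝ D) (x : E₁) :
    Convex ℝ {y | ∃ S ⊆ D, S.Countable ∧ (x, y) ∈ closure S} := by
  rintro y₁ ⟨S₁, hS₁D, hS₁c, hy₁⟩ y₂ ⟨S₂, hS₂D, hS₂c, hy₂⟩ a b ha hb hab
  refine ⟨image2 (fun p q ↦ a • p + b • q) S₁ S₂, ?_, hS₁c.image2 hS₂c _, ?_⟩
  · rintro _ ⟨p, hp, q, hq, rfl⟩
    exact hD (hS₁D hp) (hS₂D hq) ha hb hab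
  · have hcombo : ((x, a • y₁ + b • y₂) : E₁ × E₂) = a • (x, y₁) + b • (x, y₂) := by
      simp [Convex.combo_self hab]
    rw [hcombo]
    exact map_mem_closure₂ (f := fun p q ↦ a • p + b • q) (by fun_prop) hy₁ hy₂
      fun p hp q hq ↦ mem_image2_of_mem hp hq

theorem ConvexCountableTightness.prod [RegularSpace E₂] [LocallyConvexSpace ℝ E₂]
    {C₁ : Set E₁} {C₂ : Set E₂} (hC₂ : IsCompact C₂) (hC₂conv : Convex ℝ C₂)
    (h₁ : ConvexCountableTightness C₁) (h₂ : ConvexCountableTightness C₂) :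
    ConvexCountableTightness (C₁ ×ˢ C₂) := by
  rintro D hDC hD ⟨x, y⟩ hxy
  set G := C₂ ∩ {y | ∃ S ⊆ D, S.Countable ∧ (x, y) ∈ closure S}
  have hyG : y ∈ closure G := by
    refine (mem_closure_iff_nhds_basis
      (LocallyConvexSpace.convex_basis (𝕜 := ℝ) y).nhds_closure).2 ?_
    rintro V ⟨hV, hVconv⟩
    have hxyD : (x, y) ∈ closure (D ∩ univ ×ˢ V) := by
      rw [mem_closure_iff_nhdsWithin_neBot, nhdsWithin_inter_of_mem'
        (mem_nhdsWithin_of_mem_nhds (prod_mem_nhds univ_mem hV))]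
      exact mem_closure_iff_nhdsWithin_neBot.1 hxy
    obtain ⟨T, hTD, hTc, hxT⟩ := h₁.exists_countable_map_mem_closure
      (ContinuousLinearMap.fst ℝ E₁ E₂) (hD.inter (convex_univ.prod hVconv))
      (fun p hp ↦ (hDC hp.1).1) hxyD
    obtain ⟨b, hbC₂, hxb⟩ := hC₂.exists_prodMk_mem_closure (fun p hp ↦ (hDC (hTD hp).1).2) hxT
    exact ⟨b, ⟨hbC₂, T, hTD.trans inter_subset_left, hTc, hxb⟩,
      map_mem_closure continuous_snd hxb fun p hp ↦ (hTD hp).2.2⟩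
  obtain ⟨G₀, hG₀G, hG₀c, hyG₀⟩ := h₂ G inter_subset_left
    (hC₂conv.inter (hD.setOf_exists_countable_prodMk_mem_closure x)) y hyG
  choose! S hSD hSc hxS using fun b (hb : b ∈ G₀) ↦ (hG₀G hb).2
  refine ⟨⋃ b ∈ G₀, S b, iUnion₂_subset hSD, hG₀c.biUnion hSc, ?_⟩
  have hG₀S : MapsTo (Prod.mk x) G₀ (closure (⋃ b ∈ G₀, S b)) := fun b hb ↦
    closure_mono (subset_biUnion_of_mem hb) (hxS b hb)
  exact closure_closure (s := ⋃ b ∈ G₀, S b) ▸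
    map_mem_closure (Continuous.prodMk_right x) hyG₀ hG₀S

end Prod

theorem ConvexCountableTightness.univ_pi_fin {n : ℕ} {E : Fin n → Type*}
    [∀ i, AddCommGroup (E i)] [∀ i, Module ℝ (E i)] [∀ i, TopologicalSpace (E i)]
    [∀ i, ContinuousAdd (E i)] [∀ i, ContinuousConstSMul ℝ (E i)] [∀ i, RegularSpace (E i)]
    [∀ i, LocallyConvexSpace ℝ (E i)] {C : ∀ i, Set (E i)} (hC : ∀ i, IsCompact (C i))
    (hconv : ∀ i, Convex ℝ (C i)) (hcct : ∀ i, ConvexCountableTightness (C i)) :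
    ConvexCountableTightness (pi univ C) := by
  induction n with
  | zero => exact fun D _ _ x hx ↦ ⟨D, subset_rfl, D.to_countable, hx⟩
  | succ n ih =>
    have hprod := (hcct 0).prod (isCompact_univ_pi fun i ↦ hC i.succ)
      (convex_pi fun i _ ↦ hconv i.succ) (ih (fun i ↦ hC i.succ) (fun i ↦ hconv i.succ)
        fun i ↦ hcct i.succ)
    convert hprod.preimage (Fin.consEquivL ℝ E).symm using 1
    ext x
    simp [Fin.forall_fin_succ, Fin.tail]

/-- Let `(Eₙ)` be a sequence of locally convex spaces and for each `n`
let `Cₙ ⊆ Eₙ` be a compact convex set having convex countable tightness. Then the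
product `∏ₙ Cₙ` has convex countable tightness in `∏ₙ Eₙ` (with the product topology). -/
theorem convexCountableTightness_pi
    {E : ℕ → Type*} [∀ n, AddCommGroup (E n)] [∀ n, Module ℝ (E n)]
    [∀ n, TopologicalSpace (E n)] [∀ n, IsTopologicalAddGroup (E n)]
    [∀ n, ContinuousSMul ℝ (E n)] [∀ n, LocallyConvexSpace ℝ (E n)]
    (C : ∀ n, Set (E n))
    (hc : ∀ n, IsCompact (C n)) (hconv : ∀ n, Convex ℝ (C n))
    (hcct : ∀ n, ConvexCountableTightness (C n)) :
    ConvexCountableTightness (Set.pi Set.univ C) := by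
  intro D hDC hD x hx
  have hrestrict (n : ℕ) := (ConvexCountableTightness.univ_pi_fin (fun i : Fin n ↦ hc i)
    (fun i ↦ hconv i) fun i ↦ hcct i).exists_countable_map_mem_closure
    (ContinuousLinearMap.pi fun i : Fin n ↦ ContinuousLinearMap.proj (R := ℝ) (φ := E) i) hD
    (fun d hd i _ ↦ hDC hd i trivial) hx
  choose T hTD hTc hxT using hrestrict
  exact ⟨⋃ n, T n, iUnion_subset hTD, countable_iUnion hTc,
    mem_closure_iUnion_of_forall_restrict_mem_closure hxT⟩
end

section
/- Let Γ be a nonempty set and 1 < p, q < ∞ with 1/p + 1/q ≥ 1. In the projective tensor product ℓ_p(Γ) ⊗̂_π ℓ_q(Γ), the family {e_i ⊗ ẽ_i : i ∈ Γ} (where (e_i) and (ẽ_i) are the canonical unit vector bases) is isometrically equivalent to the canonical basis of ℓ₁(Γ): for every finite F ⊆ Γ and scalars (λ_i)_{i∈F}, the projective tensor norm of Σ_{i∈F} λ_i e_i ⊗ ẽ_i equals Σ_{i∈F} |λ_i|. -/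
/-!
A bilinear form `S` of norm at most one has `|S(e_i, ẽ_i)| ≤ 1`, which bounds the projective norm
of `∑ λ_i e_i ⊗ ẽ_i` by `∑ |λ_i|`. Conversely, since `1/p + 1/q ≥ 1`, the conjugate exponent `r`
of `p` satisfies `q ≤ r`, so `ℓ_q` embeds contractively into `ℓ_r`; composing with the Hölder
pairing `ℓ_p × ℓ_r → ℝ`, weighted by the signs of the `λ_i`, gives a form of norm at most one
that takes the value `∑ |λ_i|` on the tensor.
-/

open TensorProduct
open scoped ENNReal

variable {X Y : Type*} [NormedAddCommGroup X] [NormedSpace ℝ X]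
  [NormedAddCommGroup Y] [NormedSpace ℝ Y]

/-- A continuous bilinear form, viewed as a plain bilinear map. -/
noncomputable def bilinL (X Y : Type*) [NormedAddCommGroup X] [NormedSpace ℝ X]
    [NormedAddCommGroup Y] [NormedSpace ℝ Y] :
    (X →L[ℝ] Y →L[ℝ] ℝ) →ₗ[ℝ] (X →ₗ[ℝ] Y →ₗ[ℝ] ℝ) :=
  (LinearMap.llcomp ℝ X (Y →L[ℝ] ℝ) (Y →ₗ[ℝ] ℝ) (ContinuousLinearMap.coeLM ℝ)) ∘ₗ
    ContinuousLinearMap.coeLM ℝ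

/-- The linear functional on `X ⊗ Y` induced by a continuous bilinear form `S`,
i.e. the action of `S` on tensors. -/
noncomputable def tensorEval (X Y : Type*) [NormedAddCommGroup X] [NormedSpace ℝ X]
    [NormedAddCommGroup Y] [NormedSpace ℝ Y] :
    (X →L[ℝ] Y →L[ℝ] ℝ) →ₗ[ℝ] (X ⊗[ℝ] Y →ₗ[ℝ] ℝ) :=
  (TensorProduct.lift.equiv (RingHom.id ℝ) X Y ℝ).toLinearMap ∘ₗ bilinL X Y

/-- The projective tensor norm on `X ⊗ Y`:
`‖u‖_π = sup {|S(u)| : S a continuous bilinear form on X × Y, ‖S‖ ≤ 1}`. -/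
noncomputable def projNorm (u : X ⊗[ℝ] Y) : ℝ :=
  sSup {r : ℝ | ∃ S : X →L[ℝ] Y →L[ℝ] ℝ, ‖S‖ ≤ 1 ∧ r = |tensorEval X Y S u|}

open scoped NNReal

lemma tensorEval_tmul (S : X →L[ℝ] Y →L[ℝ] ℝ) (x : X) (y : Y) :
    tensorEval X Y S (x ⊗ₜ[ℝ] y) = S x y := by
  simp [tensorEval, bilinL]

lemma abs_tensorEval_sum_smul_tmul_le {ι : Type*} {S : X →L[ℝ] Y →L[ℝ] ℝ} (hS : ‖S‖ ≤ 1)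
    (s : Finset ι) (c : ι → ℝ) (x : ι → X) (y : ι → Y) :
    |tensorEval X Y S (∑ i ∈ s, c i • (x i ⊗ₜ[ℝ] y i))| ≤ ∑ i ∈ s, |c i| * (‖x i‖ * ‖y i‖) := by
  simp only [map_sum, map_smul, tensorEval_tmul, smul_eq_mul]
  refine (Finset.abs_sum_le_sum_abs _ _).trans (Finset.sum_le_sum fun i _ => ?_)
  rw [abs_mul]
  gcongr
  simpa using S.le_of_opNorm₂_le_of_le hS (le_refl ‖x i‖) (le_refl ‖y i‖)

lemma projNorm_eq_of_forall_le {u : X ⊗[ℝ] Y} {C : ℝ}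
    (hle : ∀ S : X →L[ℝ] Y →L[ℝ] ℝ, ‖S‖ ≤ 1 → |tensorEval X Y S u| ≤ C)
    {S₀ : X →L[ℝ] Y →L[ℝ] ℝ} (hS₀ : ‖S₀‖ ≤ 1) (hS₀u : |tensorEval X Y S₀ u| = C) :
    projNorm u = C :=
  IsGreatest.csSup_eq ⟨⟨S₀, hS₀, hS₀u.symm⟩, by rintro _ ⟨S, hS, rfl⟩; exact hle S hS⟩

lemma ENNReal.exists_holderConjugate_ge {p q : ℝ≥0∞} (hp : 1 ≤ p) (hpq : 1 ≤ p⁻¹ + q⁻¹) :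
    ∃ r, p.HolderConjugate r ∧ q ≤ r := by
  refine ⟨(1 - p⁻¹)⁻¹, ENNReal.holderConjugate_iff.2 ?_, ?_⟩
  · rw [inv_inv, add_tsub_cancel_of_le (ENNReal.inv_le_one.2 hp)]
  · rw [← ENNReal.inv_le_inv, inv_inv, tsub_le_iff_right, add_comm]
    exact hpq

namespace lp

section OfLE

variable {α : Type*} {E : α → Type*} [∀ i, NormedAddCommGroup (E i)] {q r : ℝ≥0∞}

theorem norm_linearMapOfLE_apply_le (𝕜 : Type*) [NormedRing 𝕜] [∀ i, Module 𝕜 (E i)]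
    [∀ i, IsBoundedSMul 𝕜 (E i)] (hq : q ≠ 0) (hqr : q ≤ r) (f : lp E q) :
    ‖linearMapOfLE 𝕜 E hqr f‖ ≤ ‖f‖ := by
  have hf : 0 ≤ ‖f‖ := norm_nonneg' f
  rcases eq_or_ne r ⊤ with rfl | hr
  · exact norm_le_of_forall_le hf fun i => norm_apply_le_norm hq f i
  have hq' : 0 < q.toReal := ENNReal.toReal_pos hq (ne_top_of_le_ne_top hr hqr)
  have hqr' : 0 ≤ r.toReal - q.toReal := sub_nonneg.2 (ENNReal.toReal_mono hr hqr)
  have hr' : 0 < r.toReal := by linarith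
  -- `‖f i‖ ≤ ‖f‖` lets us trade the exponent `r` for the smaller `q`
  refine norm_le_of_forall_sum_le hr' hf fun s => ?_
  have hsplit (t : ℝ) (ht : 0 ≤ t) : t ^ r.toReal = t ^ (r.toReal - q.toReal) * t ^ q.toReal := by
    rw [← Real.rpow_add' ht (by simpa using hr'.ne'), sub_add_cancel]
  calc ∑ i ∈ s, ‖f i‖ ^ r.toReal
      ≤ ∑ i ∈ s, ‖f‖ ^ (r.toReal - q.toReal) * ‖f i‖ ^ q.toReal := by
        refine Finset.sum_le_sum fun i _ => ?_
        rw [hsplit _ (norm_nonneg _)]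
        gcongr
        exact norm_apply_le_norm hq f i
    _ = ‖f‖ ^ (r.toReal - q.toReal) * ∑ i ∈ s, ‖f i‖ ^ q.toReal := by rw [Finset.mul_sum]
    _ ≤ ‖f‖ ^ (r.toReal - q.toReal) * ‖f‖ ^ q.toReal := by
        gcongr
        exact sum_rpow_le_norm_rpow hq' f s
    _ = ‖f‖ ^ r.toReal := (hsplit _ hf).symm

end OfLE

theorem exists_diagonal_form {Γ : Type*} {p q : ℝ≥0∞} [Fact (1 ≤ p)] [Fact (1 ≤ q)]
    (hpq : 1 ≤ p⁻¹ + q⁻¹) (ε : Γ → ℝ) (hε : ∀ i, |ε i| ≤ 1) :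
    ∃ S : lp (fun _ : Γ => ℝ) p →L[ℝ] lp (fun _ : Γ => ℝ) q →L[ℝ] ℝ,
      ‖S‖ ≤ 1 ∧ ∀ x y, S x y = ∑' i, ε i * (x i * y i) := by
  obtain ⟨r, hr, hqr⟩ := ENNReal.exists_holderConjugate_ge (Fact.out : 1 ≤ p) hpq
  have : Fact (1 ≤ r) := ⟨ENNReal.HolderConjugate.one_le r p⟩
  let B : Γ → ℝ →L[ℝ] ℝ →L[ℝ] ℝ := fun i => ε i • ContinuousLinearMap.mul ℝ ℝ
  have hB (i : Γ) : ‖B i‖ ≤ (1 : ℝ≥0) := by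
    calc ‖B i‖ ≤ ‖ε i‖ * ‖ContinuousLinearMap.mul ℝ ℝ‖ :=
          ContinuousLinearMap.opNorm_smul_le (ε i) _
      _ ≤ 1 := by simpa using hε i
  let ι : lp (fun _ : Γ => ℝ) q →L[ℝ] lp (fun _ : Γ => ℝ) r :=
    (linearMapOfLE ℝ _ hqr).mkContinuous 1 fun y => by
      simpa using norm_linearMapOfLE_apply_le ℝ (zero_lt_one.trans_le Fact.out).ne' hqr y
  refine ⟨(dualPairing p r B hB).bilinearComp (.id ℝ _) ι, ?_, fun x y => ?_⟩
  · refine ContinuousLinearMap.opNorm_le_bound₂ _ zero_le_one fun x y => ?_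
    calc ‖dualPairing p r B hB x (ι y)‖ ≤ 1 * ‖x‖ * ‖ι y‖ :=
          (dualPairing p r B hB).le_of_opNorm₂_le_of_le (norm_dualPairing B hB) le_rfl le_rfl
      _ ≤ 1 * ‖x‖ * ‖y‖ := by
          gcongr
          simpa using ι.le_of_opNorm_le (LinearMap.mkContinuous_norm_le _ zero_le_one _) y
  · simp [ContinuousLinearMap.bilinearComp_apply, dualPairing_apply, B, ι]

end lp

theorem projNorm_sum_diagonal_lp_general (Γ : Type*) [DecidableEq Γ] (p q : ℝ≥0∞)
    [Fact (1 ≤ p)] [Fact (1 ≤ q)]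
    (hpq : 1 ≤ 1 / p + 1 / q)
    (F : Finset Γ) (lam : Γ → ℝ) :
    projNorm ((∑ i ∈ F, lam i •
        ((lp.single p i (1 : ℝ) : lp (fun _ : Γ => ℝ) p) ⊗ₜ[ℝ]
         (lp.single q i (1 : ℝ) : lp (fun _ : Γ => ℝ) q))) :
        (lp (fun _ : Γ => ℝ) p) ⊗[ℝ] (lp (fun _ : Γ => ℝ) q)) =
      ∑ i ∈ F, |lam i| := by
  have norm_single (r : ℝ≥0∞) [Fact (1 ≤ r)] (i : Γ) :
      ‖(lp.single r i (1 : ℝ) : lp (fun _ : Γ => ℝ) r)‖ = 1 := by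
    simpa using lp.norm_single (E := fun _ : Γ => ℝ) (zero_lt_one.trans_le Fact.out) i 1
  obtain ⟨S, hS, hS_apply⟩ := lp.exists_diagonal_form (Γ := Γ) (p := p) (q := q)
    (by simpa only [one_div] using hpq) (fun i => SignType.sign (lam i)) fun i => by
      cases SignType.sign (lam i) <;> simp
  refine projNorm_eq_of_forall_le (fun S' hS' => ?_) hS ?_
  · refine (abs_tensorEval_sum_smul_tmul_le hS' F lam _ _).trans_eq ?_
    simp [norm_single]
  · have hS_single (j : Γ) : S (lp.single p j 1) (lp.single q j 1) = SignType.sign (lam j) := by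
      simp [hS_apply, lp.single_apply, Pi.single_apply]
    simp only [map_sum, map_smul, tensorEval_tmul, smul_eq_mul, hS_single, self_mul_sign]
    exact abs_of_nonneg (by positivity)

/-- Let `Γ` be a nonempty set, `1 < p, q < ∞` with `1/p + 1/q ≥ 1`.
In `ℓ_p(Γ) ⊗̂_π ℓ_q(Γ)`, the family `{e_i ⊗ ẽ_i : i ∈ Γ}` is isometrically equivalent to
the canonical basis of `ℓ₁(Γ)`: for every finite `F ⊆ Γ` and scalars `(λ_i)`, the
projective tensor norm of `Σ_{i∈F} λ_i e_i ⊗ ẽ_i` equals `Σ_{i∈F} |λ_i|`. -/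
theorem projNorm_sum_diagonal_lp (Γ : Type*) [Nonempty Γ] [DecidableEq Γ] (p q : ℝ≥0∞)
    (hp1 : 1 < p) (hp2 : p < ⊤) (hq1 : 1 < q) (hq2 : q < ⊤)
    [Fact (1 ≤ p)] [Fact (1 ≤ q)]
    (hpq : 1 ≤ 1 / p + 1 / q)
    (F : Finset Γ) (lam : Γ → ℝ) :
    projNorm ((∑ i ∈ F, lam i •
        ((lp.single p i (1 : ℝ) : lp (fun _ : Γ => ℝ) p) ⊗ₜ[ℝ]
         (lp.single q i (1 : ℝ) : lp (fun _ : Γ => ℝ) q))) :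
        (lp (fun _ : Γ => ℝ) p) ⊗[ℝ] (lp (fun _ : Γ => ℝ) q)) =
      ∑ i ∈ F, |lam i| :=
  projNorm_sum_diagonal_lp_general Γ p q hpq F lam
end

section
/- Let X and Y be Banach spaces such that every bounded linear operator from X to Y* maps weakly compact subsets of X onto Y-limited subsets of Y* (where H ⊆ Y* is Y-limited if every weakly null sequence in Y converges to 0 uniformly on H). Then for any weakly null sequences (xₙ) in X and (yₙ) in Y, the sequence (xₙ ⊗ yₙ) is weakly null in the projective tensor product X ⊗̂_π Y. -/
open Filter Topology NormedSpace

/-- A sequence in a normed space is weakly null if it tends to `0` in the weak topology,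
i.e. `f (y n) → 0` for every continuous linear functional `f`. -/
def WeaklyNullSeq {Y : Type*} [NormedAddCommGroup Y] [NormedSpace ℝ Y] (y : ℕ → Y) : Prop :=
  ∀ f : Y →L[ℝ] ℝ, Tendsto (fun n => f (y n)) atTop (𝓝 0)

/-- A set `H ⊆ Y*` is `Y`-limited if every weakly null sequence in `Y` converges to `0`
uniformly on `H`. -/
def YLimited {Y : Type*} [NormedAddCommGroup Y] [NormedSpace ℝ Y]
    (H : Set (Y →L[ℝ] ℝ)) : Prop :=
  ∀ y : ℕ → Y, WeaklyNullSeq y →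
    ∀ ε > (0 : ℝ), ∃ N : ℕ, ∀ n ≥ N, ∀ f ∈ H, |f (y n)| ≤ ε

/-!
A weakly null sequence together with its limit is weakly compact, so `S` maps
`{0} ∪ {xₙ}` onto a `Y`-limited set `H`. Then `yₙ → 0` uniformly on `H`, and in
particular `S (xₙ) (yₙ) → 0` along the diagonal.
-/

section

variable {X : Type*} [NormedAddCommGroup X] [NormedSpace ℝ X]

theorem WeaklyNullSeq.tendsto_toWeakSpace {x : ℕ → X} (hx : WeaklyNullSeq x) :
    Tendsto (fun n => toWeakSpace ℝ X (x n)) atTop (𝓝 0) := by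
  have hind : IsInducing fun (a : WeakSpace ℝ X) (f : X →L[ℝ] ℝ) => f a := ⟨rfl⟩
  rw [hind.tendsto_nhds_iff, tendsto_pi_nhds]
  exact fun f => (map_zero f).symm ▸ hx f

theorem WeaklyNullSeq.isCompact_toWeakSpace_image {x : ℕ → X} (hx : WeaklyNullSeq x) :
    IsCompact (toWeakSpace ℝ X '' insert 0 (Set.range x)) := by
  rw [Set.image_insert_eq, map_zero, ← Set.range_comp]
  exact hx.tendsto_toWeakSpace.isCompact_insert_range

end

theorem YLimited.tendsto_apply {Y : Type*} [NormedAddCommGroup Y] [NormedSpace ℝ Y]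
    {H : Set (Y →L[ℝ] ℝ)} (hH : YLimited H) {y : ℕ → Y} (hy : WeaklyNullSeq y)
    {f : ℕ → Y →L[ℝ] ℝ} (hf : ∀ n, f n ∈ H) :
    Tendsto (fun n => f n (y n)) atTop (𝓝 0) := by
  rw [Metric.tendsto_atTop]
  intro ε hε
  obtain ⟨N, hN⟩ := hH y hy (ε / 2) (half_pos hε)
  refine ⟨N, fun n hn => ?_⟩
  rw [Real.dist_0_eq_abs]
  exact (hN n hn (f n) (hf n)).trans_lt (half_lt_self hε)

theorem tensor_weaklyNull_of_weaklyCompact_to_limited_general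
    {X Y : Type*} [NormedAddCommGroup X] [NormedSpace ℝ X]
    [NormedAddCommGroup Y] [NormedSpace ℝ Y]
    (h : ∀ (T : X →L[ℝ] (Y →L[ℝ] ℝ)) (W : Set X),
      IsCompact (toWeakSpace ℝ X '' W) → YLimited (T '' W))
    (x : ℕ → X) (hx : WeaklyNullSeq x) (y : ℕ → Y) (hy : WeaklyNullSeq y) :
    ∀ S : X →L[ℝ] (Y →L[ℝ] ℝ), Tendsto (fun n => S (x n) (y n)) atTop (𝓝 (0 : ℝ)) :=
  fun S => (h S _ hx.isCompact_toWeakSpace_image).tendsto_apply hy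
    fun n => Set.mem_image_of_mem S (Set.mem_insert_of_mem 0 (Set.mem_range_self n))

/-- Let `X, Y` be Banach spaces such that every bounded linear operator
from `X` to `Y*` maps weakly compact subsets of `X` onto `Y`-limited subsets of `Y*`.
Then for any weakly null sequences `(xₙ)` in `X` and `(yₙ)` in `Y`, the sequence
`(xₙ ⊗ yₙ)` is weakly null in `X ⊗̂_π Y`; equivalently (identifying the dual of
`X ⊗̂_π Y` with the continuous bilinear forms on `X × Y`), `S (xₙ) (yₙ) → 0` for every
continuous bilinear form `S`. -/
theorem tensor_weaklyNull_of_weaklyCompact_to_limited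
    {X Y : Type*} [NormedAddCommGroup X] [NormedSpace ℝ X] [CompleteSpace X]
    [NormedAddCommGroup Y] [NormedSpace ℝ Y] [CompleteSpace Y]
    (h : ∀ (T : X →L[ℝ] (Y →L[ℝ] ℝ)) (W : Set X),
      IsCompact (toWeakSpace ℝ X '' W) → YLimited (T '' W))
    (x : ℕ → X) (hx : WeaklyNullSeq x) (y : ℕ → Y) (hy : WeaklyNullSeq y) :
    ∀ S : X →L[ℝ] (Y →L[ℝ] ℝ), Tendsto (fun n => S (x n) (y n)) atTop (𝓝 (0 : ℝ)) :=
  tensor_weaklyNull_of_weaklyCompact_to_limited_general h x hx y hy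
end
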